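/- (One-step recursion for accelerated RSD.) Let A ∈ ℝ^{m×n}, x^0 with A x^0 = b, M symmetric positive semidefinite and positive definite on ker(A), and suppose f : ℝ^n → ℝ is differentiable and satisfies on x^0 + ker(A) the smoothness inequality f(y) ≤ f(x) + ⟨∇f(x), y−x⟩ + ½(y−x)^T M(y−x) and the strong convexity inequality f(x) ≥ f(y) + ⟨∇f(y), x−y⟩ + (σ_Z/2)(x−y)^T Z†(x−y) with σ_Z ≥ 0. Let S_1, …, S_N be sketch matrices with probabilities P_i summing to 1, Z = Σ_i P_i Z_{S_i} positive definite on ker(A), and let ν ≥ ν_max := max{ (Σ_i P_i u^T Z_{S_i} Z† Z_{S_i} u)/(u^T Z u) : u ∈ ker(A), u ≠ 0 }. Fix α ∈ (0,1], β ∈ (0,1], γ > 0, points x, v ∈ x^0 + ker(A), a minimizer x* of f over {x : Ax = b} with optimal value f*, and set y = α v + (1−α) x. For a sketch S sampled with probability P_i, define x⁺ = y − Z_S ∇f(y) and v⁺ = β v + (1−β) y − γ Z_S ∇f(y). Then Σ_i P_i [ (v⁺_i − x*)^T Z† (v⁺_i − x*) + 2 γ² ν (f(x⁺_i) − f*) ]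 ≤ β [ (v − x*)^T Z† (v − x*) + 2γ((1−α)/α)(f(x) − f*) ] + (1 − β − γ σ_Z) (y − x*)^T Z† (y − x*) + ( 2γ²ν − 2γ − 2γβ(1−α)/α ) (f(y) − f*), where x⁺_i, v⁺_i denote the updates computed with S = S_i. -/

import Mathlib

open Matrix

-- The Moore–Penrose pseudoinverse of a real matrix, defined via the four
-- Penrose conditions (which have a unique solution for every real matrix).
open Classical in
noncomputable def mpinv {k l : Type*} [Fintype k] [Fintype l] (B : Matrix k l ℝ) :
    Matrix l k ℝ :=
  if h : ∃ X : Matrix l k ℝ,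
      B * X * B = B ∧ X * B * X = X ∧ (B * X)ᵀ = B * X ∧ (X * B)ᵀ = X * B
  then h.choose else 0

/-- `P_S = I - (AS)†(AS)`, the orthogonal projection onto `ker(AS)`. -/
noncomputable def Pmat {m n p : ℕ} (A : Matrix (Fin m) (Fin n) ℝ)
    (S : Matrix (Fin n) (Fin p) ℝ) : Matrix (Fin p) (Fin p) ℝ :=
  1 - mpinv (A * S) * (A * S)

/-- `Z_S = S P_S (P_Sᵀ Sᵀ M S P_S)† P_Sᵀ Sᵀ`. -/
noncomputable def Zmat {m n p : ℕ} (A : Matrix (Fin m) (Fin n) ℝ)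
    (M : Matrix (Fin n) (Fin n) ℝ) (S : Matrix (Fin n) (Fin p) ℝ) :
    Matrix (Fin n) (Fin n) ℝ :=
  S * Pmat A S * mpinv ((Pmat A S)ᵀ * Sᵀ * M * S * Pmat A S) * (Pmat A S)ᵀ * Sᵀ

/-- The gradient of `f : ℝ^n → ℝ`, as a vector of partial derivatives. -/
noncomputable def gradv {n : ℕ} (f : (Fin n → ℝ) → ℝ) (x : Fin n → ℝ) : Fin n → ℝ :=
  fun i => fderiv ℝ f x (Pi.single i 1)

/-!
Write `W = Z†` and `g = ∇f(y)`. Each `Z_S` is positive semidefinite with `Z_S M Z_S = Z_S` and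
`A Z_S = 0`, so smoothness gives the descent `f(y - Z_S g) ≤ f(y) - ½ gᵀ Z_S g`, on average
`f(y) - ½ gᵀ Z g`. Since `Z` is definite on `ker A`, `Z W` fixes `ker A`, and
`w = β (v - x*) + (1 - β) (y - x*)` lies there; hence the expectation of
`(v⁺ - x*)ᵀ W (v⁺ - x*)` is `wᵀ W w - 2γ gᵀ w + γ² Σ Pᵢ (Z_{Sᵢ} g)ᵀ W (Z_{Sᵢ} g)`.
The last sum is at most `ν gᵀ Z g` (apply the definition of `ν` to `Z W g ∈ ker A`, which every
`Z_{Sᵢ}` with `Pᵢ > 0` maps like `g`), and the descent cancels it. Strong convexity bounds `gᵀ w`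
from below and convexity of `u ↦ uᵀ W u` bounds `wᵀ W w`.
-/

structure IsPenroseInverse {k l : Type*} [Fintype k] [Fintype l] (B : Matrix k l ℝ)
    (X : Matrix l k ℝ) : Prop where
  mul_inv_mul : B * X * B = B
  inv_mul_inv : X * B * X = X
  isSymm_mul_inv : (B * X).IsSymm
  isSymm_inv_mul : (X * B).IsSymm

namespace IsPenroseInverse

variable {k l : Type*} [Fintype k] [Fintype l] {B : Matrix k l ℝ} {X Y : Matrix l k ℝ}

theorem unique (hX : IsPenroseInverse B X) (hY : IsPenroseInverse B Y) : X = Y := by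
  have hBX : B * X = B * Y := calc
    B * X = (B * Y * (B * X))ᵀ := by
      rw [← Matrix.mul_assoc, hY.mul_inv_mul, hX.isSymm_mul_inv.eq]
    _ = B * X * (B * Y) := by
      rw [transpose_mul, hX.isSymm_mul_inv.eq, hY.isSymm_mul_inv.eq]
    _ = B * Y := by rw [← Matrix.mul_assoc, hX.mul_inv_mul]
  have hXB : X * B = Y * B := calc
    X * B = (X * B * (Y * B))ᵀ := by
      rw [Matrix.mul_assoc, ← Matrix.mul_assoc B, hY.mul_inv_mul, hX.isSymm_inv_mul.eq]
    _ = Y * B * (X * B) := by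
      rw [transpose_mul, hX.isSymm_inv_mul.eq, hY.isSymm_inv_mul.eq]
    _ = Y * B := by rw [Matrix.mul_assoc, ← Matrix.mul_assoc B, hX.mul_inv_mul]
  calc X = X * B * X := hX.inv_mul_inv.symm
    _ = Y * B * Y := by rw [Matrix.mul_assoc, hBX, ← Matrix.mul_assoc, hXB]
    _ = Y := hY.inv_mul_inv

theorem transpose (hX : IsPenroseInverse B X) : IsPenroseInverse Bᵀ Xᵀ where
  mul_inv_mul := by rw [← transpose_mul, ← transpose_mul, ← Matrix.mul_assoc, hX.mul_inv_mul]
  inv_mul_inv := by rw [← transpose_mul, ← transpose_mul, ← Matrix.mul_assoc, hX.inv_mul_inv]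
  isSymm_mul_inv := by rw [← transpose_mul]; exact hX.isSymm_inv_mul.transpose
  isSymm_inv_mul := by rw [← transpose_mul]; exact hX.isSymm_mul_inv.transpose

theorem isSymm {B X : Matrix l l ℝ} (hB : B.IsSymm) (hX : IsPenroseInverse B X) : X.IsSymm :=
  (hB.eq ▸ hX.transpose).unique hX

theorem posSemidef {B X : Matrix l l ℝ} (hB : B.PosSemidef) (hX : IsPenroseInverse B X) :
    X.PosSemidef := by
  have h := hB.conjTranspose_mul_mul_same X
  rwa [conjTranspose_eq_transpose_of_trivial, (hX.isSymm (isHermitian_iff_isSymm.mp hB.1)).eq,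
    hX.inv_mul_inv] at h

theorem mul_comm {B X : Matrix l l ℝ} (hB : B.IsSymm) (hX : IsPenroseInverse B X) :
    B * X = X * B := by
  rw [← hX.isSymm_mul_inv.eq, transpose_mul, (hX.isSymm hB).eq, hB.eq]

end IsPenroseInverse

theorem Matrix.IsSymm.isPenroseInverse_cfc_inv {n : Type*} [Fintype n] [DecidableEq n]
    {B : Matrix n n ℝ} (hB : B.IsSymm) : IsPenroseInverse B (cfc (·⁻¹ : ℝ → ℝ) B) := by
  have hB' : IsSelfAdjoint B := isHermitian_iff_isSymm.mpr hB
  have hmul (f g : ℝ → ℝ) : cfc f B * cfc g B = cfc (fun x => f x * g x) B :=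
    (cfc_mul f g B ((Set.toFinite _).continuousOn _) ((Set.toFinite _).continuousOn _)).symm
  have hsymm (f : ℝ → ℝ) : (cfc f B).IsSymm := isHermitian_iff_isSymm.mp (cfc_predicate f B)
  -- Inverting the eigenvalues, with `0⁻¹ = 0`, gives the pseudoinverse.
  have h : IsPenroseInverse (cfc (fun x : ℝ => x) B) (cfc (·⁻¹ : ℝ → ℝ) B) := by
    refine ⟨?_, ?_, hmul _ _ ▸ hsymm _, hmul _ _ ▸ hsymm _⟩ <;> rw [hmul, hmul]
    · simp only [mul_inv_mul_cancel]
    · simpa using congr(cfc $(funext fun x : ℝ => mul_inv_mul_cancel x⁻¹) B)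
  rwa [cfc_id' ℝ B] at h

theorem exists_isPenroseInverse {k l : Type*} [Fintype k] [Fintype l] (B : Matrix k l ℝ) :
    ∃ X, IsPenroseInverse B X := by
  classical
  have hG : (Bᵀ * B).IsSymm := by rw [IsSymm, transpose_mul, transpose_transpose]
  obtain ⟨W, hW⟩ : ∃ W, IsPenroseInverse (Bᵀ * B) W := ⟨_, hG.isPenroseInverse_cfc_inv⟩
  have hWs : W.IsSymm := hW.isSymm hG
  -- `1 - Bᵀ B W` annihilates `Bᵀ B`, hence also `Bᵀ`.
  have hGWB : Bᵀ * B * W * Bᵀ = Bᵀ := by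
    have h : (1 - Bᵀ * B * W) * (Bᴴ * B) = 0 := by
      rw [conjTranspose_eq_transpose_of_trivial, Matrix.sub_mul, Matrix.one_mul,
        hW.mul_inv_mul, sub_self]
    rw [mul_conjTranspose_mul_self_eq_zero, Matrix.sub_mul, Matrix.one_mul, sub_eq_zero,
      conjTranspose_eq_transpose_of_trivial] at h
    exact h.symm
  refine ⟨W * Bᵀ, ?_, ?_, ?_, ?_⟩
  · apply Matrix.transpose_injective
    simp only [transpose_mul, transpose_transpose, hWs.eq, ← Matrix.mul_assoc, hGWB]
  · rw [Matrix.mul_assoc W, ← Matrix.mul_assoc (W * _), hW.inv_mul_inv]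
  · rw [IsSymm, transpose_mul, transpose_mul, transpose_transpose, hWs.eq, Matrix.mul_assoc]
  · rw [Matrix.mul_assoc]
    exact hW.isSymm_inv_mul

theorem isPenroseInverse_mpinv {k l : Type*} [Fintype k] [Fintype l] (B : Matrix k l ℝ) :
    IsPenroseInverse B (mpinv B) := by
  obtain ⟨X, hX⟩ := exists_isPenroseInverse B
  have h : ∃ X : Matrix l k ℝ,
      B * X * B = B ∧ X * B * X = X ∧ (B * X)ᵀ = B * X ∧ (X * B)ᵀ = X * B :=
    ⟨X, hX.1, hX.2, hX.3, hX.4⟩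
  rw [mpinv, dif_pos h]
  obtain ⟨h₁, h₂, h₃, h₄⟩ := h.choose_spec
  exact ⟨h₁, h₂, h₃, h₄⟩

theorem Matrix.IsSymm.mpinv {l : Type*} [Fintype l] {B : Matrix l l ℝ} (hB : B.IsSymm) :
    (mpinv B).IsSymm :=
  (isPenroseInverse_mpinv B).isSymm hB

theorem Matrix.PosSemidef.mpinv {l : Type*} [Fintype l] {B : Matrix l l ℝ}
    (hB : B.PosSemidef) : (mpinv B).PosSemidef :=
  (isPenroseInverse_mpinv B).posSemidef hB

section Sandwich

variable {n q : Type*} [Fintype n] [Fintype q] {M : Matrix n n ℝ} (C : Matrix n q ℝ)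

theorem mul_mpinv_mul_transpose_mul_self :
    C * mpinv (Cᵀ * M * C) * Cᵀ * M * (C * mpinv (Cᵀ * M * C) * Cᵀ) =
      C * mpinv (Cᵀ * M * C) * Cᵀ := by
  conv_rhs => rw [← (isPenroseInverse_mpinv (Cᵀ * M * C)).inv_mul_inv]
  simp only [Matrix.mul_assoc]

theorem posSemidef_mul_mpinv_mul_transpose (hM : M.PosSemidef) :
    (C * mpinv (Cᵀ * M * C) * Cᵀ).PosSemidef := by
  have hG := hM.conjTranspose_mul_mul_same C
  rw [conjTranspose_eq_transpose_of_trivial] at hG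
  simpa only [conjTranspose_eq_transpose_of_trivial] using
    hG.mpinv.mul_mul_conjTranspose_same C

end Sandwich

section Zmat

variable {m n p : ℕ} (A : Matrix (Fin m) (Fin n) ℝ) {M : Matrix (Fin n) (Fin n) ℝ}
  (S : Matrix (Fin n) (Fin p) ℝ)

theorem Zmat_eq : Zmat A M S =
    S * Pmat A S * mpinv ((S * Pmat A S)ᵀ * M * (S * Pmat A S)) * (S * Pmat A S)ᵀ := by
  simp only [Zmat, transpose_mul, Matrix.mul_assoc]

theorem Zmat_mul_mul_Zmat : Zmat A M S * M * Zmat A M S = Zmat A M S := by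
  rw [Zmat_eq]
  exact mul_mpinv_mul_transpose_mul_self _

theorem posSemidef_Zmat (hM : M.PosSemidef) : (Zmat A M S).PosSemidef := by
  rw [Zmat_eq]
  exact posSemidef_mul_mpinv_mul_transpose _ hM

theorem mul_Zmat : A * Zmat A M S = 0 := by
  have h : A * (S * Pmat A S) = 0 := by
    rw [← Matrix.mul_assoc, Pmat, Matrix.mul_sub, Matrix.mul_one, ← Matrix.mul_assoc,
      (isPenroseInverse_mpinv (A * S)).mul_inv_mul, sub_self]
  rw [Zmat_eq, Matrix.mul_assoc (S * Pmat A S), ← Matrix.mul_assoc A, h, Matrix.zero_mul]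

end Zmat

theorem Matrix.IsSymm.dotProduct_mulVec_comm {n : Type*} [Fintype n] {W : Matrix n n ℝ}
    (hW : W.IsSymm) (a c : n → ℝ) : a ⬝ᵥ W *ᵥ c = c ⬝ᵥ W *ᵥ a := by
  rw [dotProduct_mulVec, ← mulVec_transpose, hW.eq, dotProduct_comm]

theorem Matrix.PosSemidef.convexOn_dotProduct_mulVec {n : Type*} [Fintype n]
    {W : Matrix n n ℝ} (hW : W.PosSemidef) : ConvexOn ℝ Set.univ fun x => x ⬝ᵥ W *ᵥ x := by
  refine ⟨convex_univ, fun x _ y _ a b ha hb hab => ?_⟩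
  have hxy : 0 ≤ (x - y) ⬝ᵥ W *ᵥ (x - y) := by simpa using hW.dotProduct_mulVec_nonneg (x - y)
  have hsymm := (isHermitian_iff_isSymm.mp hW.1).dotProduct_mulVec_comm x y
  obtain rfl : b = 1 - a := by linarith
  simp only [smul_eq_mul, mulVec_add, mulVec_sub, mulVec_smul, dotProduct_add, add_dotProduct,
    dotProduct_sub, sub_dotProduct, dotProduct_smul, smul_dotProduct] at hxy ⊢
  linarith [mul_nonneg (mul_nonneg ha hb) hxy]

theorem apply_sub_mulVec_le_of_smooth {m n : Type*} [Fintype n] {A : Matrix m n ℝ}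
    {M Q : Matrix n n ℝ} {f : (n → ℝ) → ℝ} {b : m → ℝ} {y g : n → ℝ}
    (hsmooth : ∀ z, A *ᵥ z = b →
      f z ≤ f y + g ⬝ᵥ (z - y) + 1 / 2 * ((z - y) ⬝ᵥ M *ᵥ (z - y)))
    (hy : A *ᵥ y = b) (hAQ : A * Q = 0) (hQ : Q.IsSymm) (hQMQ : Q * M * Q = Q) :
    f (y - Q *ᵥ g) ≤ f y - 1 / 2 * (g ⬝ᵥ Q *ᵥ g) := by
  have h := hsmooth (y - Q *ᵥ g) (by rw [mulVec_sub, mulVec_mulVec, hAQ, zero_mulVec, sub_zero, hy])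
  have hquad : Q *ᵥ g ⬝ᵥ M *ᵥ (Q *ᵥ g) = g ⬝ᵥ Q *ᵥ g := by
    rw [dotProduct_comm, ← hQ.dotProduct_mulVec_comm, mulVec_mulVec, mulVec_mulVec, hQMQ]
  simp only [sub_sub_cancel_left, mulVec_neg, dotProduct_neg, neg_dotProduct, neg_neg,
    hquad] at h
  linarith

theorem le_dotProduct_of_strongConvex {n : Type*} [Fintype n] {W : Matrix n n ℝ}
    (hW : W.PosSemidef) {f : (n → ℝ) → ℝ} {σ α β : ℝ} (hσ : 0 ≤ σ) (hα : 0 < α) (hα1 : α ≤ 1)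
    (hβ : 0 ≤ β) {g x v xs y : n → ℝ} (hy : y = α • v + (1 - α) • x)
    (hx : f y + g ⬝ᵥ (x - y) + σ / 2 * ((x - y) ⬝ᵥ W *ᵥ (x - y)) ≤ f x)
    (hxs : f y + g ⬝ᵥ (xs - y) + σ / 2 * ((xs - y) ⬝ᵥ W *ᵥ (xs - y)) ≤ f xs) :
    β * ((1 - α) / α) * (f y - f x) + (f y - f xs) +
        σ / 2 * ((y - xs) ⬝ᵥ W *ᵥ (y - xs)) ≤
      g ⬝ᵥ (β • (v - xs) + (1 - β) • (y - xs)) := by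
  have hw : β • (v - xs) + (1 - β) • (y - xs) = (y - xs) + (β * ((1 - α) / α)) • (y - x) := by
    rw [hy]
    ext i
    simp only [Pi.add_apply, Pi.sub_apply, Pi.smul_apply, smul_eq_mul]
    field_simp
    ring
  have hxq : 0 ≤ (x - y) ⬝ᵥ W *ᵥ (x - y) := by
    simpa using hW.dotProduct_mulVec_nonneg (x - y)
  have hxsq : (xs - y) ⬝ᵥ W *ᵥ (xs - y) = (y - xs) ⬝ᵥ W *ᵥ (y - xs) := by
    rw [← neg_sub y xs, mulVec_neg, dotProduct_neg, neg_dotProduct, neg_neg]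
  have hconvex : f y - f x ≤ g ⬝ᵥ (y - x) := by
    rw [dotProduct_sub g] at hx ⊢
    linarith [mul_nonneg hσ hxq]
  have hstrong : f y - f xs + σ / 2 * ((y - xs) ⬝ᵥ W *ᵥ (y - xs)) ≤ g ⬝ᵥ (y - xs) := by
    rw [dotProduct_sub g, hxsq] at hxs
    rw [dotProduct_sub g]
    linarith
  have hc : 0 ≤ β * ((1 - α) / α) := mul_nonneg hβ (div_nonneg (by linarith) hα.le)
  rw [hw, dotProduct_add, dotProduct_smul, smul_eq_mul]
  linarith [mul_le_mul_of_nonneg_left hconvex hc]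

theorem posSemidef_sum_smul {ι n : Type*} [Fintype ι] {Q : ι → Matrix n n ℝ} {P : ι → ℝ}
    (hQ : ∀ i, (Q i).PosSemidef) (hP : ∀ i, 0 ≤ P i) : (∑ i, P i • Q i).PosSemidef :=
  posSemidef_sum _ fun i _ => (hQ i).smul (hP i)

section SketchFamily

variable {ι m n : Type*} [Fintype ι] [Fintype n] {A : Matrix m n ℝ} {M : Matrix n n ℝ}
  {Q : ι → Matrix n n ℝ} {P : ι → ℝ} {Z : Matrix n n ℝ}

theorem mul_sum_smul_eq_zero (hAQ : ∀ i, A * Q i = 0) : A * ∑ i, P i • Q i = 0 := by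
  simp [Matrix.mul_sum, hAQ]

theorem dotProduct_sum_smul_mulVec (a c : n → ℝ) :
    a ⬝ᵥ (∑ i, P i • Q i) *ᵥ c = ∑ i, P i * (a ⬝ᵥ Q i *ᵥ c) := by
  simp only [sum_mulVec, smul_mulVec, dotProduct_sum, dotProduct_smul, smul_eq_mul]

theorem mulVec_eq_zero_of_sum_smul_mulVec_eq_zero (hQ : ∀ i, (Q i).PosSemidef)
    (hP : ∀ i, 0 ≤ P i) {w : n → ℝ} (hw : (∑ i, P i • Q i) *ᵥ w = 0) {i : ι} (hi : P i ≠ 0) :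
    Q i *ᵥ w = 0 := by
  have hnonneg (j : ι) : 0 ≤ P j * (w ⬝ᵥ Q j *ᵥ w) :=
    mul_nonneg (hP j) (by simpa using (hQ j).dotProduct_mulVec_nonneg w)
  have hsum : ∑ j, P j * (w ⬝ᵥ Q j *ᵥ w) = 0 := by
    rw [← dotProduct_sum_smul_mulVec, hw, dotProduct_zero]
  have hterm := (Finset.sum_eq_zero_iff_of_nonneg fun j _ => hnonneg j).mp hsum i
    (Finset.mem_univ i)
  rw [← (hQ i).dotProduct_mulVec_zero_iff, star_trivial]
  exact (mul_eq_zero.mp hterm).resolve_left hi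

theorem mulVec_mpinv_mulVec_of_mulVec_eq_zero (hZ : Z.IsSymm) (hAZ : A * Z = 0)
    (hpd : ∀ u, A *ᵥ u = 0 → u ≠ 0 → 0 < u ⬝ᵥ Z *ᵥ u) {u : n → ℝ} (hu : A *ᵥ u = 0) :
    Z *ᵥ (mpinv Z *ᵥ u) = u := by
  have hW := isPenroseInverse_mpinv Z
  set r := u - Z *ᵥ (mpinv Z *ᵥ u)
  have hAr : A *ᵥ r = 0 := by
    rw [mulVec_sub, hu, mulVec_mulVec, hAZ, zero_mulVec, sub_self]
  have hZr : Z *ᵥ r = 0 := by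
    rw [mulVec_sub, mulVec_mulVec, mulVec_mulVec, Matrix.mul_assoc, hW.mul_comm hZ,
      ← Matrix.mul_assoc, hW.mul_inv_mul, sub_self]
  by_contra hne
  have hpos := hpd r hAr (sub_ne_zero.mpr (Ne.symm hne))
  rw [hZr, dotProduct_zero] at hpos
  exact lt_irrefl 0 hpos

theorem sum_mul_dotProduct_mpinv_le (hQ : ∀ i, (Q i).PosSemidef) (hAQ : ∀ i, A * Q i = 0)
    (hP : ∀ i, 0 ≤ P i) (hZ : Z = ∑ i, P i • Q i) {ν : ℝ}
    (hν : ∀ u, A *ᵥ u = 0 → u ≠ 0 →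
      ∑ i, P i * (Q i *ᵥ u ⬝ᵥ mpinv Z *ᵥ (Q i *ᵥ u)) ≤ ν * (u ⬝ᵥ Z *ᵥ u)) (g : n → ℝ) :
    ∑ i, P i * (Q i *ᵥ g ⬝ᵥ mpinv Z *ᵥ (Q i *ᵥ g)) ≤ ν * (g ⬝ᵥ Z *ᵥ g) := by
  have hW := isPenroseInverse_mpinv Z
  have hZs : Z.IsSymm := isHermitian_iff_isSymm.mp (hZ ▸ posSemidef_sum_smul hQ hP).1
  -- Pass to `u = Z Z† g ∈ ker A`, which every `Q i` with `P i ≠ 0` maps like `g`.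
  set u := Z *ᵥ (mpinv Z *ᵥ g)
  have hAu : A *ᵥ u = 0 := by
    rw [mulVec_mulVec, mulVec_mulVec, hZ, mul_sum_smul_eq_zero hAQ, Matrix.zero_mul, zero_mulVec]
  have hZu : Z *ᵥ u = Z *ᵥ g := by
    rw [mulVec_mulVec, mulVec_mulVec, Matrix.mul_assoc, hW.mul_comm hZs, ← Matrix.mul_assoc,
      hW.mul_inv_mul]
  have hQu (i : ι) (hi : P i ≠ 0) : Q i *ᵥ g = Q i *ᵥ u := by
    refine sub_eq_zero.mp ?_
    rw [← mulVec_sub]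
    refine mulVec_eq_zero_of_sum_smul_mulVec_eq_zero hQ hP ?_ hi
    rw [← hZ, mulVec_sub, hZu, sub_self]
  have huZu : u ⬝ᵥ Z *ᵥ u = g ⬝ᵥ Z *ᵥ g := by
    rw [hZu, hZs.dotProduct_mulVec_comm, hZu]
  have hsum : ∑ i, P i * (Q i *ᵥ g ⬝ᵥ mpinv Z *ᵥ (Q i *ᵥ g)) =
      ∑ i, P i * (Q i *ᵥ u ⬝ᵥ mpinv Z *ᵥ (Q i *ᵥ u)) := by
    refine Finset.sum_congr rfl fun i _ => ?_
    by_cases hi : P i = 0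
    · rw [hi, zero_mul, zero_mul]
    · rw [hQu i hi]
  rw [hsum, ← huZu]
  by_cases hu0 : u = 0
  · simp [hu0]
  · exact hν u hAu hu0

theorem nonneg_of_sum_mul_dotProduct_mpinv_le (hQ : ∀ i, (Q i).PosSemidef) (hP : ∀ i, 0 ≤ P i)
    (hZ : Z = ∑ i, P i • Q i) (hpd : ∀ u, A *ᵥ u = 0 → u ≠ 0 → 0 < u ⬝ᵥ Z *ᵥ u) {ν : ℝ}
    (hν : ∀ u, A *ᵥ u = 0 → u ≠ 0 →
      ∑ i, P i * (Q i *ᵥ u ⬝ᵥ mpinv Z *ᵥ (Q i *ᵥ u)) ≤ ν * (u ⬝ᵥ Z *ᵥ u))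
    {u : n → ℝ} (hu : A *ᵥ u = 0) (hu0 : u ≠ 0) : 0 ≤ ν := by
  have hW : (mpinv Z).PosSemidef := (hZ ▸ posSemidef_sum_smul hQ hP).mpinv
  have hsum : 0 ≤ ∑ i, P i * (Q i *ᵥ u ⬝ᵥ mpinv Z *ᵥ (Q i *ᵥ u)) :=
    Finset.sum_nonneg fun i _ => mul_nonneg (hP i)
      (by simpa using hW.dotProduct_mulVec_nonneg (Q i *ᵥ u))
  exact nonneg_of_mul_nonneg_left (hsum.trans (hν u hu hu0)) (hpd u hu hu0)

theorem sum_mul_apply_sub_mulVec_le (hQ : ∀ i, (Q i).IsSymm) (hQMQ : ∀ i, Q i * M * Q i = Q i)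
    (hAQ : ∀ i, A * Q i = 0) (hP : ∀ i, 0 ≤ P i) (hPsum : ∑ i, P i = 1)
    (hZ : Z = ∑ i, P i • Q i) {f : (n → ℝ) → ℝ} {b : m → ℝ} {y g : n → ℝ}
    (hsmooth : ∀ z, A *ᵥ z = b →
      f z ≤ f y + g ⬝ᵥ (z - y) + 1 / 2 * ((z - y) ⬝ᵥ M *ᵥ (z - y)))
    (hy : A *ᵥ y = b) :
    ∑ i, P i * f (y - Q i *ᵥ g) ≤ f y - 1 / 2 * (g ⬝ᵥ Z *ᵥ g) := by
  calc ∑ i, P i * f (y - Q i *ᵥ g)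
      ≤ ∑ i, P i * (f y - 1 / 2 * (g ⬝ᵥ Q i *ᵥ g)) :=
        Finset.sum_le_sum fun i _ => mul_le_mul_of_nonneg_left
          (apply_sub_mulVec_le_of_smooth hsmooth hy (hAQ i) (hQ i) (hQMQ i)) (hP i)
    _ = f y - 1 / 2 * (g ⬝ᵥ Z *ᵥ g) := by
        simp only [mul_sub, Finset.sum_sub_distrib, ← Finset.sum_mul, hPsum, one_mul, hZ,
          dotProduct_sum_smul_mulVec, Finset.mul_sum]
        ring_nf

theorem sum_mul_dotProduct_mpinv_add_le (hQ : ∀ i, (Q i).PosSemidef)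
    (hQMQ : ∀ i, Q i * M * Q i = Q i) (hAQ : ∀ i, A * Q i = 0) (hP : ∀ i, 0 ≤ P i)
    (hPsum : ∑ i, P i = 1) (hZ : Z = ∑ i, P i • Q i)
    (hpd : ∀ u, A *ᵥ u = 0 → u ≠ 0 → 0 < u ⬝ᵥ Z *ᵥ u) {ν : ℝ}
    (hν : ∀ u, A *ᵥ u = 0 → u ≠ 0 →
      ∑ i, P i * (Q i *ᵥ u ⬝ᵥ mpinv Z *ᵥ (Q i *ᵥ u)) ≤ ν * (u ⬝ᵥ Z *ᵥ u))
    {f : (n → ℝ) → ℝ} {b : m → ℝ} {y g : n → ℝ}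
    (hsmooth : ∀ z, A *ᵥ z = b →
      f z ≤ f y + g ⬝ᵥ (z - y) + 1 / 2 * ((z - y) ⬝ᵥ M *ᵥ (z - y)))
    (hy : A *ᵥ y = b) (c : ℝ) :
    ∑ i, P i * (Q i *ᵥ g ⬝ᵥ mpinv Z *ᵥ (Q i *ᵥ g)) + 2 * ν * ∑ i, P i * (f (y - Q i *ᵥ g) - c)
      ≤ 2 * ν * (f y - c) := by
  have hsum : ∑ i, P i * (f (y - Q i *ᵥ g) - c) = ∑ i, P i * f (y - Q i *ᵥ g) - c := by
    simp only [mul_sub, Finset.sum_sub_distrib, ← Finset.sum_mul, hPsum, one_mul]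
  rw [hsum]
  by_cases hker : ∃ u, A *ᵥ u = 0 ∧ u ≠ 0
  · obtain ⟨u, hu, hu0⟩ := hker
    have hν0 := nonneg_of_sum_mul_dotProduct_mpinv_le hQ hP hZ hpd hν hu hu0
    have hvar := sum_mul_dotProduct_mpinv_le hQ hAQ hP hZ hν g
    have hdesc := sum_mul_apply_sub_mulVec_le (fun i => isHermitian_iff_isSymm.mp (hQ i).1)
      hQMQ hAQ hP hPsum hZ hsmooth hy
    linarith [mul_le_mul_of_nonneg_left hdesc hν0]
  · -- `ν` may be negative here, but `ker A = 0` kills every step `Q i *ᵥ g ∈ ker A`.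
    push Not at hker
    have hQg (i : ι) : Q i *ᵥ g = 0 := hker _ (by rw [mulVec_mulVec, hAQ i, zero_mulVec])
    simp [hQg, ← Finset.sum_mul, hPsum]

theorem sum_mul_dotProduct_sub_smul_mulVec {W : Matrix n n ℝ} (hW : W.IsSymm)
    (hQ : ∀ i, (Q i).IsSymm) (hPsum : ∑ i, P i = 1) (hZ : Z = ∑ i, P i • Q i) {w : n → ℝ}
    (hw : Z *ᵥ (W *ᵥ w) = w) (γ : ℝ) (g : n → ℝ) :
    ∑ i, P i * ((w - γ • Q i *ᵥ g) ⬝ᵥ W *ᵥ (w - γ • Q i *ᵥ g)) =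
      w ⬝ᵥ W *ᵥ w - 2 * γ * (g ⬝ᵥ w) + γ ^ 2 * ∑ i, P i * (Q i *ᵥ g ⬝ᵥ W *ᵥ (Q i *ᵥ g)) := by
  have hcross : ∑ i, P i * (Q i *ᵥ g ⬝ᵥ W *ᵥ w) = g ⬝ᵥ w := by
    have hswap (i : ι) : Q i *ᵥ g ⬝ᵥ W *ᵥ w = g ⬝ᵥ Q i *ᵥ (W *ᵥ w) := by
      rw [dotProduct_comm, (hQ i).dotProduct_mulVec_comm]
    simp_rw [hswap, ← dotProduct_sum_smul_mulVec, ← hZ, hw]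
  have hterm (i : ι) : P i * ((w - γ • Q i *ᵥ g) ⬝ᵥ W *ᵥ (w - γ • Q i *ᵥ g)) =
      P i * (w ⬝ᵥ W *ᵥ w) - 2 * γ * (P i * (Q i *ᵥ g ⬝ᵥ W *ᵥ w)) +
        γ ^ 2 * (P i * (Q i *ᵥ g ⬝ᵥ W *ᵥ (Q i *ᵥ g))) := by
    have hsymm := hW.dotProduct_mulVec_comm w (Q i *ᵥ g)
    simp only [mulVec_sub, mulVec_smul, dotProduct_sub, sub_dotProduct, dotProduct_smul,
      smul_dotProduct, smul_eq_mul] at hsymm ⊢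
    linear_combination (-(P i * γ)) * hsymm
  simp only [hterm, Finset.sum_add_distrib, Finset.sum_sub_distrib, ← Finset.mul_sum,
    ← Finset.sum_mul, hPsum, one_mul, hcross]

theorem sum_mul_dotProduct_sub_smul_add_le (hQ : ∀ i, (Q i).PosSemidef)
    (hQMQ : ∀ i, Q i * M * Q i = Q i) (hAQ : ∀ i, A * Q i = 0) (hP : ∀ i, 0 ≤ P i)
    (hPsum : ∑ i, P i = 1) (hZ : Z = ∑ i, P i • Q i)
    (hpd : ∀ u, A *ᵥ u = 0 → u ≠ 0 → 0 < u ⬝ᵥ Z *ᵥ u) {ν : ℝ}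
    (hν : ∀ u, A *ᵥ u = 0 → u ≠ 0 →
      ∑ i, P i * (Q i *ᵥ u ⬝ᵥ mpinv Z *ᵥ (Q i *ᵥ u)) ≤ ν * (u ⬝ᵥ Z *ᵥ u))
    {f : (n → ℝ) → ℝ} {b : m → ℝ} {y g w : n → ℝ}
    (hsmooth : ∀ z, A *ᵥ z = b →
      f z ≤ f y + g ⬝ᵥ (z - y) + 1 / 2 * ((z - y) ⬝ᵥ M *ᵥ (z - y)))
    (hy : A *ᵥ y = b) (hw : A *ᵥ w = 0) (γ c : ℝ) :
    ∑ i, P i * ((w - γ • Q i *ᵥ g) ⬝ᵥ mpinv Z *ᵥ (w - γ • Q i *ᵥ g) +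
        2 * γ ^ 2 * ν * (f (y - Q i *ᵥ g) - c)) ≤
      w ⬝ᵥ mpinv Z *ᵥ w - 2 * γ * (g ⬝ᵥ w) + 2 * γ ^ 2 * ν * (f y - c) := by
  have hZs : Z.IsSymm := isHermitian_iff_isSymm.mp (hZ ▸ posSemidef_sum_smul hQ hP).1
  have hZw := mulVec_mpinv_mulVec_of_mulVec_eq_zero hZs (hZ ▸ mul_sum_smul_eq_zero hAQ) hpd hw
  have hexp := sum_mul_dotProduct_sub_smul_mulVec hZs.mpinv
    (fun i => isHermitian_iff_isSymm.mp (hQ i).1) hPsum hZ hZw γ g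
  have hdesc := sum_mul_dotProduct_mpinv_add_le hQ hQMQ hAQ hP hPsum hZ hpd hν hsmooth hy c
  have hgap : ∑ i, P i * (2 * γ ^ 2 * ν * (f (y - Q i *ᵥ g) - c)) =
      γ ^ 2 * (2 * ν * ∑ i, P i * (f (y - Q i *ᵥ g) - c)) := by
    simp only [Finset.mul_sum]
    exact Finset.sum_congr rfl fun i _ => by ring
  simp only [mul_add, Finset.sum_add_distrib]
  rw [hexp, hgap]
  linarith [mul_le_mul_of_nonneg_left hdesc (sq_nonneg γ)]

end SketchFamily

theorem stmt14_general {m n N : ℕ} (A : Matrix (Fin m) (Fin n) ℝ) (b : Fin m → ℝ)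
    (M : Matrix (Fin n) (Fin n) ℝ) (hM : M.PosSemidef)
    (f : (Fin n → ℝ) → ℝ)
    (hsmooth : ∀ x y : Fin n → ℝ, A.mulVec x = b → A.mulVec y = b →
      f y ≤ f x + gradv f x ⬝ᵥ (y - x) + (1 / 2) * ((y - x) ⬝ᵥ M.mulVec (y - x)))
    (p : Fin N → ℕ) (S : ∀ i : Fin N, Matrix (Fin n) (Fin (p i)) ℝ)
    (P : Fin N → ℝ) (hP : ∀ i, 0 ≤ P i) (hPsum : ∑ i, P i = 1)
    (Z : Matrix (Fin n) (Fin n) ℝ) (hZ : Z = ∑ i, P i • Zmat A M (S i))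
    (hpd : ∀ u : Fin n → ℝ, A.mulVec u = 0 → u ≠ 0 → 0 < u ⬝ᵥ Z.mulVec u)
    (σZ : ℝ) (hσ : 0 ≤ σZ)
    (hsc : ∀ x y : Fin n → ℝ, A.mulVec x = b → A.mulVec y = b →
      f x ≥ f y + gradv f y ⬝ᵥ (x - y) +
        (σZ / 2) * ((x - y) ⬝ᵥ (mpinv Z).mulVec (x - y)))
    -- `ν ≥ ν_max`
    (ν : ℝ)
    (hν : ∀ u : Fin n → ℝ, A.mulVec u = 0 → u ≠ 0 →
      (∑ i, P i * ((Zmat A M (S i)).mulVec u ⬝ᵥ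
          (mpinv Z).mulVec ((Zmat A M (S i)).mulVec u))) ≤ ν * (u ⬝ᵥ Z.mulVec u))
    (α β γ : ℝ) (hα : 0 < α ∧ α ≤ 1) (hβ : 0 < β ∧ β ≤ 1) (hγ : 0 < γ)
    (x v : Fin n → ℝ) (hx : A.mulVec x = b) (hv : A.mulVec v = b)
    (xs : Fin n → ℝ) (hxs : A.mulVec xs = b)
    (fstar : ℝ) (hfstar : f xs = fstar)
    (y : Fin n → ℝ) (hy : y = α • v + (1 - α) • x)
    (xp vp : Fin N → (Fin n → ℝ))
    (hxp : ∀ i, xp i = y - (Zmat A M (S i)).mulVec (gradv f y))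
    (hvp : ∀ i, vp i = β • v + (1 - β) • y - γ • (Zmat A M (S i)).mulVec (gradv f y)) :
    ∑ i, P i * ((vp i - xs) ⬝ᵥ (mpinv Z).mulVec (vp i - xs) +
        2 * γ ^ 2 * ν * (f (xp i) - fstar)) ≤
      β * ((v - xs) ⬝ᵥ (mpinv Z).mulVec (v - xs) +
          2 * γ * ((1 - α) / α) * (f x - fstar)) +
        (1 - β - γ * σZ) * ((y - xs) ⬝ᵥ (mpinv Z).mulVec (y - xs)) +
        (2 * γ ^ 2 * ν - 2 * γ - 2 * γ * β * ((1 - α) / α)) * (f y - fstar) := by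
  subst hfstar
  obtain ⟨hα0, hα1⟩ := hα
  obtain ⟨hβ0, hβ1⟩ := hβ
  have hQ (i : Fin N) : (Zmat A M (S i)).PosSemidef := posSemidef_Zmat A (S i) hM
  have hW : (mpinv Z).PosSemidef := (hZ ▸ posSemidef_sum_smul hQ hP).mpinv
  have hAy : A *ᵥ y = b := by
    rw [hy, mulVec_add, mulVec_smul, mulVec_smul, hv, hx, ← add_smul, add_sub_cancel, one_smul]
  have hAw : A *ᵥ (β • (v - xs) + (1 - β) • (y - xs)) = 0 := by
    simp only [mulVec_add, mulVec_smul, mulVec_sub, hv, hAy, hxs, sub_self, smul_zero, add_zero]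
  have hvp' (i : Fin N) : vp i - xs =
      β • (v - xs) + (1 - β) • (y - xs) - γ • Zmat A M (S i) *ᵥ gradv f y := by
    rw [hvp i]
    module
  have hstep := sum_mul_dotProduct_sub_smul_add_le hQ (fun i => Zmat_mul_mul_Zmat A (S i))
    (fun i => mul_Zmat A (S i)) hP hPsum hZ hpd hν (fun z hz => hsmooth y z hAy hz) hAy hAw
    γ (f xs)
  have hconv := hW.convexOn_dotProduct_mulVec.2 (Set.mem_univ (v - xs))
    (Set.mem_univ (y - xs)) hβ0.le (sub_nonneg.2 hβ1) (add_sub_cancel β 1)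
  have hcoup := le_dotProduct_of_strongConvex hW hσ hα0 hα1 hβ0.le hy
    (hsc x y hx hAy) (hsc xs y hxs hAy)
  simp only [hvp', hxp]
  simp only [smul_eq_mul] at hconv
  linarith [mul_le_mul_of_nonneg_left hcoup (by positivity : (0 : ℝ) ≤ 2 * γ)]

/-- one-step recursion (expected descent) for the accelerated
random sketch descent method. -/
theorem stmt14 {m n N : ℕ} (A : Matrix (Fin m) (Fin n) ℝ) (b : Fin m → ℝ)
    (x0 : Fin n → ℝ) (hx0 : A.mulVec x0 = b)
    (M : Matrix (Fin n) (Fin n) ℝ) (hM : M.PosSemidef)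
    (hMpd : ∀ u : Fin n → ℝ, A.mulVec u = 0 → u ≠ 0 → 0 < u ⬝ᵥ M.mulVec u)
    (f : (Fin n → ℝ) → ℝ) (hdiff : Differentiable ℝ f)
    (hsmooth : ∀ x y : Fin n → ℝ, A.mulVec x = b → A.mulVec y = b →
      f y ≤ f x + gradv f x ⬝ᵥ (y - x) + (1 / 2) * ((y - x) ⬝ᵥ M.mulVec (y - x)))
    (p : Fin N → ℕ) (S : ∀ i : Fin N, Matrix (Fin n) (Fin (p i)) ℝ)
    (P : Fin N → ℝ) (hP : ∀ i, 0 ≤ P i) (hPsum : ∑ i, P i = 1)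
    (Z : Matrix (Fin n) (Fin n) ℝ) (hZ : Z = ∑ i, P i • Zmat A M (S i))
    (hpd : ∀ u : Fin n → ℝ, A.mulVec u = 0 → u ≠ 0 → 0 < u ⬝ᵥ Z.mulVec u)
    (σZ : ℝ) (hσ : 0 ≤ σZ)
    (hsc : ∀ x y : Fin n → ℝ, A.mulVec x = b → A.mulVec y = b →
      f x ≥ f y + gradv f y ⬝ᵥ (x - y) +
        (σZ / 2) * ((x - y) ⬝ᵥ (mpinv Z).mulVec (x - y)))
    -- `ν ≥ ν_max`
    (ν : ℝ)
    (hν : ∀ u : Fin n → ℝ, A.mulVec u = 0 → u ≠ 0 →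
      (∑ i, P i * ((Zmat A M (S i)).mulVec u ⬝ᵥ
          (mpinv Z).mulVec ((Zmat A M (S i)).mulVec u))) ≤ ν * (u ⬝ᵥ Z.mulVec u))
    (α β γ : ℝ) (hα : 0 < α ∧ α ≤ 1) (hβ : 0 < β ∧ β ≤ 1) (hγ : 0 < γ)
    (x v : Fin n → ℝ) (hx : A.mulVec x = b) (hv : A.mulVec v = b)
    (xs : Fin n → ℝ) (hxs : A.mulVec xs = b)
    (fstar : ℝ) (hfstar : f xs = fstar)
    (hfs : ∀ z : Fin n → ℝ, A.mulVec z = b → fstar ≤ f z)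
    (y : Fin n → ℝ) (hy : y = α • v + (1 - α) • x)
    (xp vp : Fin N → (Fin n → ℝ))
    (hxp : ∀ i, xp i = y - (Zmat A M (S i)).mulVec (gradv f y))
    (hvp : ∀ i, vp i = β • v + (1 - β) • y - γ • (Zmat A M (S i)).mulVec (gradv f y)) :
    ∑ i, P i * ((vp i - xs) ⬝ᵥ (mpinv Z).mulVec (vp i - xs) +
        2 * γ ^ 2 * ν * (f (xp i) - fstar)) ≤
      β * ((v - xs) ⬝ᵥ (mpinv Z).mulVec (v - xs) +
          2 * γ * ((1 - α) / α) * (f x - fstar)) +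
        (1 - β - γ * σZ) * ((y - xs) ⬝ᵥ (mpinv Z).mulVec (y - xs)) +
        (2 * γ ^ 2 * ν - 2 * γ - 2 * γ * β * ((1 - α) / α)) * (f y - fstar) :=
  stmt14_general A b M hM f hsmooth p S P hP hPsum Z hZ hpd σZ hσ hsc ν hν α β γ hα hβ hγ x v hx hv
    xs hxs fstar hfstar y hy xp vp hxp hvp
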